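/- Let E be a topological VE-space over a topologically ordered *-space Z and S₀(Z) ⊆ S_*(Z) a generating family of continuous increasing *-seminorms. Then for all S₀(Z)-bounded adjointable linear operators T, T₁, T₂ : E → E and every p ∈ S₀(Z): p̄(T₁ ∘ T₂) ≤ p̄(T₁) p̄(T₂) and p̄(T* ∘ T) = p̄(T)². In particular the seminorms p̄ are submultiplicative C*-seminorms on the *-algebra of S₀(Z)-bounded adjointable operators on E, making it a pre-locally C*-algebra. -/
import Mathlib


open scoped ComplexConjugate Topology

/-- The data of an ordered `*`-space structure on a complex vector space `Z`:
a conjugate-linear involution and a strict convex cone of selfadjoint elements. -/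
structure OrderedStarData (Z : Type*) [AddCommGroup Z] [Module ℂ Z] where
  star : Z → Z
  star_add : ∀ x y : Z, star (x + y) = star x + star y
  star_smul : ∀ (c : ℂ) (x : Z), star (c • x) = (starRingEnd ℂ) c • star x
  star_star : ∀ x : Z, star (star x) = x
  cone : Set Z
  cone_zero : (0 : Z) ∈ cone
  cone_add : ∀ x ∈ cone, ∀ y ∈ cone, x + y ∈ cone
  cone_smul : ∀ r : ℝ, 0 ≤ r → ∀ x ∈ cone, (r : ℂ) • x ∈ cone
  cone_strict : ∀ x ∈ cone, -x ∈ cone → x = 0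
  cone_star : ∀ x ∈ cone, star x = x

namespace OrderedStarData

variable {Z : Type*} [AddCommGroup Z] [Module ℂ Z]

/-- A seminorm is increasing when `0 ≤ x ≤ y` implies `p x ≤ p y`. -/
def Increasing (D : OrderedStarData Z) (p : Seminorm ℂ Z) : Prop :=
  ∀ x y : Z, x ∈ D.cone → y - x ∈ D.cone → p x ≤ p y

/-- A `*`-seminorm: `p (z*) = p z`. -/
def StarSeminorm (D : OrderedStarData Z) (p : Seminorm ℂ Z) : Prop :=
  ∀ z : Z, p (D.star z) = p z

end OrderedStarData

/-- A topologically ordered `*`-space: an ordered `*`-space with a Hausdorff locally convex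
topology generated by a family of increasing seminorms, continuous involution and closed cone. -/
structure TopOrderedStarSpace (Z : Type*) [AddCommGroup Z] [Module ℂ Z]
    [TopologicalSpace Z] extends OrderedStarData Z where
  t2 : T2Space Z
  star_continuous : Continuous star
  cone_closed : IsClosed cone
  seminorms_generate : ∃ (ι : Type) (hι : Nonempty ι) (q : ι → Seminorm ℂ Z),
      (∀ i, ∀ x y : Z, x ∈ cone → y - x ∈ cone → q i x ≤ q i y) ∧
      (letI := hι; WithSeminorms q)

namespace TopOrderedStarSpace

variable {Z : Type*} [AddCommGroup Z] [Module ℂ Z] [TopologicalSpace Z]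

/-- Membership in `S_*(Z)`, the set of continuous increasing `*`-seminorms. -/
def MemSStar (D : TopOrderedStarSpace Z) (p : Seminorm ℂ Z) : Prop :=
  Continuous ⇑p ∧ D.toOrderedStarData.Increasing p ∧ D.toOrderedStarData.StarSeminorm p

end TopOrderedStarSpace

/-- The topology of `Z` is generated by the family of seminorms `S`. -/
def GeneratesTopology {Z : Type*} [AddCommGroup Z] [Module ℂ Z] [TopologicalSpace Z]
    (S : Set (Seminorm ℂ Z)) : Prop :=
  ∃ h : Nonempty ↥S, letI := h; WithSeminorms (fun p : ↥S => (p : Seminorm ℂ Z))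

/-- A `Z`-valued gramian (vector valued inner product) on `E`, making `E` a VE-space over `Z`. -/
structure Gramian {Z : Type*} [AddCommGroup Z] [Module ℂ Z] (D : OrderedStarData Z)
    (E : Type*) [AddCommGroup E] [Module ℂ E] where
  inner : E → E → Z
  inner_self_mem : ∀ x : E, inner x x ∈ D.cone
  inner_self_eq_zero : ∀ x : E, inner x x = 0 → x = 0
  inner_herm : ∀ x y : E, inner x y = D.star (inner y x)
  inner_add_right : ∀ x y₁ y₂ : E, inner x (y₁ + y₂) = inner x y₁ + inner x y₂
  inner_smul_right : ∀ (a : ℂ) (x y : E), inner x (a • y) = a • inner x y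

namespace Gramian

variable {Z : Type*} [AddCommGroup Z] [Module ℂ Z] {D : OrderedStarData Z}
  {E : Type*} [AddCommGroup E] [Module ℂ E]
  {F : Type*} [AddCommGroup F] [Module ℂ F]

/-- The seminorm `p̃ x = p ([x,x])^{1/2}` induced on a VE-space by a seminorm on `Z`. -/
noncomputable def tilde (B : Gramian D E) (p : Seminorm ℂ Z) (x : E) : ℝ :=
  Real.sqrt (p (B.inner x x))

/-- `S` is an adjoint of `T` : `[Tx, y] = [x, Sy]`. -/
def IsAdjoint (BE : Gramian D E) (BF : Gramian D F) (T : E →ₗ[ℂ] F) (S : F →ₗ[ℂ] E) : Prop :=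
  ∀ (x : E) (y : F), BF.inner (T x) y = BE.inner x (S y)

/-- `T` is adjointable. -/
def Adjointable (BE : Gramian D E) (BF : Gramian D F) (T : E →ₗ[ℂ] F) : Prop :=
  ∃ S : F →ₗ[ℂ] E, BE.IsAdjoint BF T S

/-- `T` is bounded for the seminorm `p` : `p̃ (Tx) ≤ C p̃ x`. -/
def BoundedFor (BE : Gramian D E) (BF : Gramian D F) (T : E →ₗ[ℂ] F) (p : Seminorm ℂ Z) : Prop :=
  ∃ C : ℝ, 0 ≤ C ∧ ∀ x : E, BF.tilde p (T x) ≤ C * BE.tilde p x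

/-- The operator seminorm `p̄ T`, the infimum of the admissible bounds. -/
noncomputable def opSeminorm (BE : Gramian D E) (BF : Gramian D F) (T : E →ₗ[ℂ] F)
    (p : Seminorm ℂ Z) : ℝ :=
  sInf {C : ℝ | 0 ≤ C ∧ ∀ x : E, BF.tilde p (T x) ≤ C * BE.tilde p x}

/-- The topology of `E` is the one of a topological VE-space: it is generated by the
seminorms `p̃` for `p ∈ S`. -/
def IsVETopology [TopologicalSpace E] (B : Gramian D E) (S : Set (Seminorm ℂ Z)) : Prop :=
  ∃ h : Nonempty ↥S, letI := h;
    ∃ q : ↥S → Seminorm ℂ E, (∀ (p : ↥S) (x : E), q p x = B.tilde p.1 x) ∧ WithSeminorms q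

end Gramian

/-- A barrel: a closed, absorbent, balanced, convex set. -/
def IsBarrel {E : Type*} [AddCommGroup E] [Module ℂ E] [TopologicalSpace E] (s : Set E) : Prop :=
  IsClosed s ∧ Absorbent ℂ s ∧ Balanced ℂ s ∧ Convex ℝ s

/-- A (complex) topological vector space is barrelled if every barrel is a neighbourhood of `0`. -/
def BarrelledSp (E : Type*) [AddCommGroup E] [Module ℂ E] [TopologicalSpace E] : Prop :=
  ∀ s : Set E, IsBarrel s → s ∈ 𝓝 (0 : E)

/-- A barrel with respect to the topology of a norm function `N`. -/
def IsBarrelWrtNorm {V : Type*} [AddCommGroup V] [Module ℂ V] (N : V → ℝ) (s : Set V) : Prop :=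
  (∀ x : V, (∀ ε : ℝ, 0 < ε → ∃ y ∈ s, N (x - y) < ε) → x ∈ s) ∧
  Absorbent ℂ s ∧ Balanced ℂ s ∧ Convex ℝ s

/-- Barrelledness with respect to the topology of a norm function `N`. -/
def BarrelledWrtNorm {V : Type*} [AddCommGroup V] [Module ℂ V] (N : V → ℝ) : Prop :=
  ∀ s : Set V, IsBarrelWrtNorm N s → ∃ ε : ℝ, 0 < ε ∧ ∀ x : V, N x < ε → x ∈ s

/-- The kernel of a seminorm, as a submodule. -/
def semKer {Z : Type*} [AddCommGroup Z] [Module ℂ Z] (p : Seminorm ℂ Z) : Submodule ℂ Z where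
  carrier := {z | p z = 0}
  add_mem' := by
    intro a b ha hb
    simp only [Set.mem_setOf_eq] at ha hb ⊢
    exact le_antisymm ((map_add_le_add p a b).trans (by simp [ha, hb])) (apply_nonneg p _)
  zero_mem' := map_zero p
  smul_mem' := by
    intro c x hx
    simp only [Set.mem_setOf_eq] at hx ⊢
    rw [map_smul_eq_mul, hx, mul_zero]

section Aux

variable {Z : Type*} [AddCommGroup Z] [Module ℂ Z] {D : OrderedStarData Z}
  {E : Type*} [AddCommGroup E] [Module ℂ E]

namespace Gramian

lemma inner_smul_left' (B : Gramian D E) (a : ℂ) (x y : E) :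
    B.inner (a • x) y = (starRingEnd ℂ) a • B.inner x y := by
  rw [B.inner_herm (a • x) y, B.inner_smul_right, D.star_smul, B.inner_herm x y]

lemma inner_add_left' (B : Gramian D E) (x₁ x₂ y : E) :
    B.inner (x₁ + x₂) y = B.inner x₁ y + B.inner x₂ y := by
  rw [B.inner_herm (x₁ + x₂) y, B.inner_add_right, D.star_add,
    ← B.inner_herm x₁ y, ← B.inner_herm x₂ y]

lemma inner_neg_right' (B : Gramian D E) (x y : E) : B.inner x (-y) = - B.inner x y := by
  have h := B.inner_smul_right (-1) x y
  simpa using h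

lemma inner_neg_left' (B : Gramian D E) (x y : E) : B.inner (-x) y = - B.inner x y := by
  have h := B.inner_smul_left' (-1) x y
  simpa using h

lemma inner_sub_right' (B : Gramian D E) (x y z : E) :
    B.inner x (y - z) = B.inner x y - B.inner x z := by
  rw [sub_eq_add_neg, B.inner_add_right, B.inner_neg_right', sub_eq_add_neg]

lemma inner_sub_left' (B : Gramian D E) (x y z : E) :
    B.inner (x - y) z = B.inner x z - B.inner y z := by
  rw [sub_eq_add_neg, B.inner_add_left', B.inner_neg_left', sub_eq_add_neg]

lemma gram_expand (B : Gramian D E) (x y : E) (t : ℝ) :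
    B.inner (x - (t : ℂ) • y) (x - (t : ℂ) • y)
      = B.inner x x - (t : ℂ) • B.inner x y - (t : ℂ) • B.inner y x
        + ((t : ℂ) * (t : ℂ)) • B.inner y y := by
  rw [B.inner_sub_right', B.inner_sub_left', B.inner_sub_left', B.inner_smul_right,
    B.inner_smul_left', B.inner_smul_left', B.inner_smul_right, Complex.conj_ofReal,
    smul_smul]
  abel

lemma tilde_def (B : Gramian D E) (p : Seminorm ℂ Z) (x : E) :
    B.tilde p x = Real.sqrt (p (B.inner x x)) := rfl

lemma tilde_nonneg (B : Gramian D E) (p : Seminorm ℂ Z) (x : E) : 0 ≤ B.tilde p x :=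
  Real.sqrt_nonneg _

lemma tilde_sq (B : Gramian D E) (p : Seminorm ℂ Z) (x : E) :
    (B.tilde p x) ^ 2 = p (B.inner x x) :=
  Real.sq_sqrt (apply_nonneg p _)

/-- Cauchy–Schwarz for a positive inner product value. -/
lemma cs_pos (B : Gramian D E) {p : Seminorm ℂ Z} (hp : D.Increasing p)
    (x y : E) (hc : B.inner x y ∈ D.cone) :
    p (B.inner x y) ≤ Real.sqrt (p (B.inner x x)) * Real.sqrt (p (B.inner y y)) := by
  set a := B.inner x x with ha
  set b := B.inner y y with hb
  set c := B.inner x y with hcdef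
  have hyx : B.inner y x = c := by
    rw [B.inner_herm y x, ← hcdef, D.cone_star c hc]
  have key : ∀ t : ℝ, 0 ≤ t → 2 * t * p c ≤ p a + t ^ 2 * p b := by
    intro t ht
    have mem2 : (a + ((t : ℂ) * (t : ℂ)) • b) - ((2 * t : ℝ) : ℂ) • c ∈ D.cone := by
      have h := B.inner_self_mem (x - (t : ℂ) • y)
      rw [B.gram_expand x y t] at h
      rw [← ha, ← hb, ← hcdef, hyx] at h
      convert h using 1
      push_cast
      module
    have mem1 : ((2 * t : ℝ) : ℂ) • c ∈ D.cone := D.cone_smul _ (by positivity) c hc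
    have h1 : p (((2 * t : ℝ) : ℂ) • c) ≤ p (a + ((t : ℂ) * (t : ℂ)) • b) := hp _ _ mem1 mem2
    have l1 : p (((2 * t : ℝ) : ℂ) • c) = (2 * t) * p c := by
      rw [map_smul_eq_mul]
      simp [abs_of_nonneg, ht]
    have l2 : p (a + ((t : ℂ) * (t : ℂ)) • b) ≤ p a + t ^ 2 * p b := by
      refine (map_add_le_add p _ _).trans ?_
      rw [map_smul_eq_mul]
      have : ‖(t : ℂ) * (t : ℂ)‖ = t ^ 2 := by
        rw [norm_mul, Complex.norm_real]
        rw [sq]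
        exact (abs_mul_abs_self t).symm ▸ rfl
      rw [this]
    calc 2 * t * p c = p (((2 * t : ℝ) : ℂ) • c) := l1.symm
      _ ≤ p (a + ((t : ℂ) * (t : ℂ)) • b) := h1
      _ ≤ p a + t ^ 2 * p b := l2
  have quad : ∀ s : ℝ, 0 ≤ p b * (s * s) + (-(2 * p c)) * s + p a := by
    intro s
    rcases le_or_gt 0 s with hs | hs
    · have := key s hs; nlinarith
    · have h1 : 0 ≤ p b * (s * s) := mul_nonneg (apply_nonneg p b) (mul_self_nonneg s)
      have h2 : 0 ≤ -(2 * p c) * s := by nlinarith [apply_nonneg p c]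
      have h3 := apply_nonneg p a
      linarith
  have hd : discrim (p b) (-(2 * p c)) (p a) ≤ 0 := discrim_le_zero quad
  rw [discrim] at hd
  have hsq : p c ^ 2 ≤ p a * p b := by nlinarith
  calc p c = Real.sqrt (p c ^ 2) := (Real.sqrt_sq (apply_nonneg p c)).symm
    _ ≤ Real.sqrt (p a * p b) := Real.sqrt_le_sqrt hsq
    _ = Real.sqrt (p a) * Real.sqrt (p b) := Real.sqrt_mul (apply_nonneg p a) _

lemma op_spec (B : Gramian D E) (p : Seminorm ℂ Z) {T : E →ₗ[ℂ] E}
    (hT : B.BoundedFor B T p) :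
    0 ≤ B.opSeminorm B T p ∧ ∀ x, B.tilde p (T x) ≤ B.opSeminorm B T p * B.tilde p x := by
  obtain ⟨C₀, hC₀, hC₀b⟩ := hT
  have hne : Set.Nonempty {C : ℝ | 0 ≤ C ∧ ∀ x, B.tilde p (T x) ≤ C * B.tilde p x} :=
    ⟨C₀, hC₀, hC₀b⟩
  have h0 : 0 ≤ B.opSeminorm B T p := le_csInf hne fun C hC => hC.1
  refine ⟨h0, fun x => ?_⟩
  rcases (B.tilde_nonneg p x).eq_or_lt with h | h
  · have h0x : B.tilde p x = 0 := h.symm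
    have hle : B.tilde p (T x) ≤ 0 := by
      have := hC₀b x; rw [h0x, mul_zero] at this; exact this
    rw [h0x, mul_zero]; exact hle
  · rw [← div_le_iff₀ h]
    exact le_csInf hne fun C hC => (div_le_iff₀ h).mpr (hC.2 x)

lemma op_le' (B : Gramian D E) (p : Seminorm ℂ Z) {T : E →ₗ[ℂ] E} {C : ℝ} (hC : 0 ≤ C)
    (h : ∀ x, B.tilde p (T x) ≤ C * B.tilde p x) : B.opSeminorm B T p ≤ C :=
  csInf_le ⟨0, fun _ hy => hy.1⟩ ⟨hC, h⟩

end Gramian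

end Aux

/-- On the `*`-algebra of `S₀`-bounded adjointable operators of a topological
VE-space, the operator seminorms are submultiplicative and satisfy the `C*`-identity. -/
theorem statement5 {Z E : Type*} [AddCommGroup Z] [Module ℂ Z] [TopologicalSpace Z]
    [AddCommGroup E] [Module ℂ E] [TopologicalSpace E]
    (D : TopOrderedStarSpace Z) (BE : Gramian D.toOrderedStarData E)
    (S₀ : Set (Seminorm ℂ Z)) (hS₀ : ∀ p ∈ S₀, D.MemSStar p)
    (hS₀gen : GeneratesTopology S₀) (hE : BE.IsVETopology S₀) :
    ∀ p ∈ S₀,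
      (∀ T₁ T₂ : E →ₗ[ℂ] E, BE.Adjointable BE T₁ → BE.Adjointable BE T₂ →
        (∀ q ∈ S₀, BE.BoundedFor BE T₁ q) → (∀ q ∈ S₀, BE.BoundedFor BE T₂ q) →
        BE.opSeminorm BE (T₁ ∘ₗ T₂) p ≤ BE.opSeminorm BE T₁ p * BE.opSeminorm BE T₂ p) ∧
      (∀ T S : E →ₗ[ℂ] E, BE.IsAdjoint BE T S → (∀ q ∈ S₀, BE.BoundedFor BE T q) →
        BE.opSeminorm BE (S ∘ₗ T) p = (BE.opSeminorm BE T p) ^ 2) := by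
  intro p hp
  have hinc : D.toOrderedStarData.Increasing p := (hS₀ p hp).2.1
  constructor
  · intro T₁ T₂ _ _ hb₁ hb₂
    obtain ⟨h₁0, h₁⟩ := BE.op_spec p (hb₁ p hp)
    obtain ⟨h₂0, h₂⟩ := BE.op_spec p (hb₂ p hp)
    refine BE.op_le' p (mul_nonneg h₁0 h₂0) fun x => ?_
    rw [LinearMap.comp_apply]
    calc BE.tilde p (T₁ (T₂ x)) ≤ BE.opSeminorm BE T₁ p * BE.tilde p (T₂ x) := h₁ _
      _ ≤ BE.opSeminorm BE T₁ p * (BE.opSeminorm BE T₂ p * BE.tilde p x) :=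
        mul_le_mul_of_nonneg_left (h₂ x) h₁0
      _ = BE.opSeminorm BE T₁ p * BE.opSeminorm BE T₂ p * BE.tilde p x := by ring
  · intro T S hTS hbT
    obtain ⟨hT0, hTb⟩ := BE.op_spec p (hbT p hp)
    set Ct := BE.opSeminorm BE T p with hCt
    have hSrev : ∀ y z : E, BE.inner (S y) z = BE.inner y (T z) := by
      intro y z
      rw [BE.inner_herm (S y) z, ← hTS z y, ← BE.inner_herm y (T z)]
    have hSb : ∀ y, BE.tilde p (S y) ≤ Ct * BE.tilde p y := by
      intro y
      have hmem : BE.inner y (T (S y)) ∈ D.toOrderedStarData.cone := by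
        rw [← hSrev y (S y)]; exact BE.inner_self_mem (S y)
      have hcs := BE.cs_pos hinc y (T (S y)) hmem
      rw [← hSrev y (S y), ← BE.tilde_def p y, ← BE.tilde_def p (T (S y))] at hcs
      have hcs' : (BE.tilde p (S y)) ^ 2 ≤ BE.tilde p y * BE.tilde p (T (S y)) := by
        rw [BE.tilde_sq p (S y)]; exact hcs
      have hTb' := hTb (S y)
      have h2 : BE.tilde p (S y) * BE.tilde p (S y) ≤ (Ct * BE.tilde p y) * BE.tilde p (S y) := by
        calc BE.tilde p (S y) * BE.tilde p (S y) = (BE.tilde p (S y)) ^ 2 := (sq _).symm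
          _ ≤ BE.tilde p y * BE.tilde p (T (S y)) := hcs'
          _ ≤ BE.tilde p y * (Ct * BE.tilde p (S y)) :=
            mul_le_mul_of_nonneg_left hTb' (BE.tilde_nonneg p y)
          _ = (Ct * BE.tilde p y) * BE.tilde p (S y) := by ring
      rcases (BE.tilde_nonneg p (S y)).eq_or_lt with h | h
      · rw [← h]; exact mul_nonneg hT0 (BE.tilde_nonneg p y)
      · exact le_of_mul_le_mul_right h2 h
    have hSBdd : BE.BoundedFor BE S p := ⟨Ct, hT0, hSb⟩
    obtain ⟨hS0', hSb'⟩ := BE.op_spec p hSBdd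
    set Cs := BE.opSeminorm BE S p with hCs
    have hopS_le : Cs ≤ Ct := BE.op_le' p hT0 hSb
    have hSTb : ∀ x, BE.tilde p ((S ∘ₗ T) x) ≤ (Cs * Ct) * BE.tilde p x := by
      intro x
      rw [LinearMap.comp_apply]
      calc BE.tilde p (S (T x)) ≤ Cs * BE.tilde p (T x) := hSb' _
        _ ≤ Cs * (Ct * BE.tilde p x) := mul_le_mul_of_nonneg_left (hTb x) hS0'
        _ = (Cs * Ct) * BE.tilde p x := by ring
    have hST_le : BE.opSeminorm BE (S ∘ₗ T) p ≤ Ct ^ 2 := by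
      refine (BE.op_le' p (mul_nonneg hS0' hT0) hSTb).trans ?_
      calc Cs * Ct ≤ Ct * Ct := mul_le_mul_of_nonneg_right hopS_le hT0
        _ = Ct ^ 2 := (sq Ct).symm
    obtain ⟨hST0, hSTb'⟩ := BE.op_spec p ⟨Cs * Ct, mul_nonneg hS0' hT0, hSTb⟩
    set Cst := BE.opSeminorm BE (S ∘ₗ T) p with hCst
    have hrev : ∀ x, BE.tilde p (T x) ≤ Real.sqrt Cst * BE.tilde p x := by
      intro x
      have hmem : BE.inner x (S (T x)) ∈ D.toOrderedStarData.cone := by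
        rw [← hTS x (T x)]; exact BE.inner_self_mem (T x)
      have hcs := BE.cs_pos hinc x (S (T x)) hmem
      rw [← hTS x (T x), ← BE.tilde_def p x, ← BE.tilde_def p (S (T x))] at hcs
      have h1 : (BE.tilde p (T x)) ^ 2 ≤ BE.tilde p x * BE.tilde p (S (T x)) := by
        rw [BE.tilde_sq p (T x)]; exact hcs
      have hSTx := hSTb' x
      rw [LinearMap.comp_apply] at hSTx
      have h2 : BE.tilde p x * BE.tilde p (S (T x)) ≤ Cst * (BE.tilde p x) ^ 2 := by
        calc BE.tilde p x * BE.tilde p (S (T x)) ≤ BE.tilde p x * (Cst * BE.tilde p x) :=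
            mul_le_mul_of_nonneg_left hSTx (BE.tilde_nonneg p x)
          _ = Cst * (BE.tilde p x) ^ 2 := by ring
      have h3 : (BE.tilde p (T x)) ^ 2 ≤ (Real.sqrt Cst * BE.tilde p x) ^ 2 := by
        have heq : (Real.sqrt Cst * BE.tilde p x) ^ 2 = Cst * (BE.tilde p x) ^ 2 := by
          rw [mul_pow, Real.sq_sqrt hST0]
        rw [heq]; exact h1.trans h2
      calc BE.tilde p (T x) = Real.sqrt ((BE.tilde p (T x)) ^ 2) :=
          (Real.sqrt_sq (BE.tilde_nonneg p (T x))).symm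
        _ ≤ Real.sqrt ((Real.sqrt Cst * BE.tilde p x) ^ 2) := Real.sqrt_le_sqrt h3
        _ = Real.sqrt Cst * BE.tilde p x := Real.sqrt_sq (mul_nonneg (Real.sqrt_nonneg _) (BE.tilde_nonneg p x))
    have hT_le : Ct ≤ Real.sqrt Cst := BE.op_le' p (Real.sqrt_nonneg _) hrev
    have h4 : Ct ^ 2 ≤ Cst := by
      calc Ct ^ 2 ≤ (Real.sqrt Cst) ^ 2 := pow_le_pow_left₀ hT0 hT_le 2
        _ = Cst := Real.sq_sqrt hST0
    exact le_antisymm hST_le h4
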